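/- arXiv:cs/0604058 — 6 statements merged into one kernel-verified Lean document; each statement's English description precedes it below -/
import Mathlib

section
/- For any strings P and T with |P| ≥ 1 and any position k with 0 ≤ k ≤ |T|, the set { p : P occurs at position p in T and p ≤ k and k ≤ p + |P| } is a single arithmetic progression: there exist natural numbers a, d, m such that this set equals { a + i·d : 0 ≤ i < m }. -/
/-- `P` occurs at position `p` in `T`. -/
def Occurs {α : Type*} (P T : List α) (p : ℕ) : Prop :=
  p + P.length ≤ T.length ∧ ∀ i < P.length, T[p + i]? = P[i]?

section helper
variable {α : Type*}

/-- `T` has period `t` on the index interval `[a, a+L)`. -/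
def PerOn (T : List α) (a L t : ℕ) : Prop :=
  ∀ x, a ≤ x → x + t < a + L → T[x]? = T[x + t]?

lemma perOn_iter {T : List α} {a L t : ℕ} (h : PerOn T a L t) :
    ∀ j x, a ≤ x → x + j * t < a + L → T[x]? = T[x + j * t]? := by
  intro j
  induction j with
  | zero => intro x _ _; simp
  | succ j ih =>
    intro x hx hlt
    rw [Nat.succ_mul] at hlt ⊢
    have h1 : x + j * t < a + L := by omega
    rw [ih x hx h1]
    have h2 := h (x + j * t) (by omega) (by omega)
    rw [h2]
    congr 1
    omega

lemma fw_aux (T : List α) (a L : ℕ) :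
    ∀ s p q, p + q ≤ s → 0 < p → 0 < q → p + q ≤ L →
      PerOn T a L p → PerOn T a L q → PerOn T a L (Nat.gcd p q) := by
  intro s
  induction s with
  | zero => intro p q hs hp hq; omega
  | succ s ih =>
    intro p q hs hp hq hL hP hQ
    rcases lt_trichotomy p q with hlt | heq | hgt
    · have key : PerOn T a L (q - p) := by
        intro x hx hxr
        by_cases hc : x + q < a + L
        · have e1 := hQ x hx hc
          have e2 := hP (x + (q - p)) (by omega) (by omega)
          rw [e1, e2]
          congr 1
          omega
        · have e1 := hP (x - p) (by omega) (by omega)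
          have e2 := hQ (x - p) (by omega) (by omega)
          have e1' : T[x - p]? = T[x]? := by rw [e1]; congr 1; omega
          have e2' : T[x - p]? = T[x + (q - p)]? := by rw [e2]; congr 1; omega
          rw [← e1', e2']
      have hg : Nat.gcd p q = Nat.gcd p (q - p) := (Nat.gcd_sub_self_right hlt.le).symm
      rw [hg]
      exact ih p (q - p) (by omega) hp (by omega) (by omega) hP key
    · subst heq
      rw [Nat.gcd_self]
      exact hP
    · have key : PerOn T a L (p - q) := by
        intro x hx hxr
        by_cases hc : x + p < a + L
        · have e1 := hP x hx hc
          have e2 := hQ (x + (p - q)) (by omega) (by omega)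
          rw [e1, e2]
          congr 1
          omega
        · have e1 := hQ (x - q) (by omega) (by omega)
          have e2 := hP (x - q) (by omega) (by omega)
          have e1' : T[x - q]? = T[x]? := by rw [e1]; congr 1; omega
          have e2' : T[x - q]? = T[x + (p - q)]? := by rw [e2]; congr 1; omega
          rw [← e1', e2']
      have hg : Nat.gcd p q = Nat.gcd (p - q) q := (Nat.gcd_sub_self_left hgt.le).symm
      rw [hg]
      exact ih (p - q) q (by omega) (by omega) hq (by omega) key hQ

/-- the gap between two overlapping occurrences is a period of `P`. -/
lemma occ_occ_period {P T : List α} {p t : ℕ}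
    (h1 : Occurs P T p) (h2 : Occurs P T (p + t)) :
    ∀ y, y + t < P.length → P[y]? = P[y + t]? := by
  intro y hy
  have e1 := h1.2 (y + t) hy
  have e2 := h2.2 y (by omega)
  rw [← e1, ← e2]
  congr 1
  omega

/-- three occurrences at `a`, `a+t`, `a+e` (with `t ≤ e ≤ |P|`) make the region
`[a, a+e+|P|)` of `T` periodic with period `t`. -/
lemma occ_region_per {P T : List α} {a t e : ℕ}
    (h1 : Occurs P T a) (h2 : Occurs P T (a + t)) (h3 : Occurs P T (a + e))
    (hte : t ≤ e) (hen : e ≤ P.length) :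
    PerOn T a (e + P.length) t := by
  intro x hx hlt
  by_cases hcase : x < a + P.length
  · have e1 := h1.2 (x - a) (by omega)
    rw [show a + (x - a) = x by omega] at e1
    have e2 := h2.2 (x - a) (by omega)
    rw [show a + t + (x - a) = x + t by omega] at e2
    rw [e1, e2]
  · have hi : x - (a + e) + t < P.length := by omega
    have e1 := h3.2 (x - (a + e)) (by omega)
    rw [show a + e + (x - (a + e)) = x by omega] at e1
    have e2 := h3.2 (x - (a + e) + t) (by omega)
    rw [show a + e + (x - (a + e) + t) = x + t by omega] at e2
    have e3 := occ_occ_period h1 h2 (x - (a + e)) hi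
    rw [e1, e2, ← e3]

lemma per_occ {P T : List α} {a e j t : ℕ}
    (h1 : Occurs P T a) (hb : a + e + P.length ≤ T.length)
    (hper : PerOn T a (e + P.length) t) (hj : j * t ≤ e) :
    Occurs P T (a + j * t) := by
  constructor
  · omega
  · intro i hi
    have h2 := perOn_iter hper j (a + i) (by omega) (by omega)
    rw [show a + j * t + i = a + i + j * t by omega, ← h2]
    exact h1.2 i hi

end helper

/-- All occurrences of `P` in `T` touching a given position `k`
form a single arithmetic progression. -/
theorem stmt_0 {α : Type*} (P T : List α) (hP : 1 ≤ P.length)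
    (k : ℕ) (hk : k ≤ T.length) :
    ∃ a d m : ℕ,
      {p : ℕ | Occurs P T p ∧ p ≤ k ∧ k ≤ p + P.length} =
        {x : ℕ | ∃ i < m, x = a + i * d} := by
  classical
  set n := P.length with hn
  set Q : ℕ → Prop := fun p => Occurs P T p ∧ p ≤ k ∧ k ≤ p + n with hQ
  by_cases hne : ∃ p, Q p
  · -- the set is nonempty; take min and max
    set a := Nat.find hne with hadef
    have ha : Q a := Nat.find_spec hne
    have hmin : ∀ q, Q q → a ≤ q := fun q hq => Nat.find_min' hne hq
    set b := Nat.findGreatest Q k with hbdef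
    have hb : Q b := Nat.findGreatest_spec ha.2.1 ha
    have hmax : ∀ q, Q q → q ≤ b := fun q hq => Nat.le_findGreatest hq.2.1 hq
    have hab : a ≤ b := hmin b hb
    set e := b - a with hedef
    have hen : e ≤ n := by
      have := ha.2.2
      have := hb.2.1
      omega
    have hbae : a + e = b := by omega
    have hbT : a + e + n ≤ T.length := by
      have := hb.1.1
      omega
    by_cases he : e = 0
    · -- singleton set
      refine ⟨a, 1, 1, ?_⟩
      ext x
      simp only [Set.mem_setOf_eq]
      constructor
      · intro hx
        have h1 := hmin x hx
        have h2 := hmax x hx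
        exact ⟨0, by omega, by omega⟩
      · rintro ⟨i, hi, rfl⟩
        have : i = 0 := by omega
        subst this
        simpa using ha
    · -- general case: minimal period of the region [a, b+n)
      have hObE : Occurs P T (a + e) := by rw [hbae]; exact hb.1
      have hD : ∃ t, 0 < t ∧ t ≤ e ∧ PerOn T a (e + n) t :=
        ⟨e, by omega, le_rfl, occ_region_per ha.1 hObE hObE le_rfl hen⟩
      set π := Nat.find hD with hπdef
      obtain ⟨hπpos, hπe, hπper⟩ : 0 < π ∧ π ≤ e ∧ PerOn T a (e + n) π := Nat.find_spec hD
      have hπmin : ∀ t, 0 < t → t ≤ e → PerOn T a (e + n) t → π ≤ t := fun t h1 h2 h3 =>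
        Nat.find_min' hD ⟨h1, h2, h3⟩
      -- Claim A : every element of the set is ≡ a (mod π)
      have claimA : ∀ q, Q q → π ∣ (q - a) := by
        intro q hq
        have haq := hmin q hq
        have hqb := hmax q hq
        rcases Nat.eq_or_lt_of_le haq with h | h
        · simp [← h]
        · set t := q - a with htdef
          have hqat : a + t = q := by omega
          have hOt : Occurs P T (a + t) := by rw [hqat]; exact hq.1
          have hTper : PerOn T a (e + n) t :=
            occ_region_per ha.1 hOt hObE (by omega) hen
          have hgcd : PerOn T a (e + n) (Nat.gcd t π) :=
            fw_aux T a (e + n) (t + π) t π le_rfl (by omega) hπpos (by omega) hTper hπper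
          have hg1 : Nat.gcd t π ≤ t := Nat.gcd_le_left π (by omega)
          have hg2 : Nat.gcd t π ≤ π := Nat.le_of_dvd hπpos (Nat.gcd_dvd_right t π)
          have hgpos : 0 < Nat.gcd t π := Nat.gcd_pos_of_pos_right t hπpos
          have hge : π ≤ Nat.gcd t π := hπmin _ hgpos (by omega) hgcd
          have : Nat.gcd t π = π := by omega
          rw [← this]
          exact Nat.gcd_dvd_left t π
      have hπdvd : π ∣ e := by
        rw [hedef]
        exact claimA b hb
      -- Claim B : every a + j*π up to b is in the set
      have claimB : ∀ j, j * π ≤ e → Q (a + j * π) := by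
        intro j hj
        refine ⟨per_occ ha.1 hbT hπper hj, ?_, ?_⟩
        · have := hb.2.1
          omega
        · have := ha.2.2
          omega
      refine ⟨a, π, e / π + 1, ?_⟩
      ext x
      simp only [Set.mem_setOf_eq]
      constructor
      · intro hx
        have h1 := hmin x hx
        have h2 := hmax x hx
        obtain ⟨c, hc⟩ := claimA x hx
        rw [Nat.mul_comm] at hc
        refine ⟨c, ?_, by omega⟩
        have hce : c * π ≤ e := by omega
        have : c ≤ e / π := Nat.le_div_iff_mul_le hπpos |>.2 hce
        omega
      · rintro ⟨i, hi, rfl⟩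
        have hie : i * π ≤ e := by
          have h1 : i ≤ e / π := by omega
          have h2 : i * π ≤ (e / π) * π := Nat.mul_le_mul_right π h1
          have h3 : (e / π) * π = e := Nat.div_mul_cancel hπdvd
          omega
        exact claimB i hie
  · -- empty set
    refine ⟨0, 0, 0, ?_⟩
    ext x
    simp only [Set.mem_setOf_eq]
    constructor
    · intro hx
      exact absurd ⟨x, hx⟩ hne
    · rintro ⟨i, hi, _⟩
      omega
end

section
/- Suppose a string P occurs at position a + i·d in a string T for every i < m, where 0 < d and (m − 1)·d ≤ |P| (so all these occurrences share a common touched position). Write e_i = a + i·d + |P| for the ending position of the i-th occurrence. Then for every length ℓ and all indices i ≤ j < m with e_j + ℓ ≤ e_{m−1}, the length-ℓ substring of T starting at position e_i equals the length-ℓ substring of T starting at position e_j. -/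
lemma step_per {α : Type*} (P T : List α) (a d m : ℕ)
    (hd : 0 < d) (hm : 2 ≤ m) (hmd : (m - 1) * d ≤ P.length)
    (hocc : ∀ i < m, Occurs P T (a + i * d))
    (u : ℕ) (hx2 : a + u + d < a + (m - 1) * d + P.length) :
    T[a + u]? = T[a + u + d]? := by
  have hdP : d ≤ P.length := le_trans (Nat.le_mul_of_pos_left d (by omega)) hmd
  by_cases hcase : (m - 2) * d ≤ u
  · have hD : (m - 1) * d = (m - 2) * d + d := by
      have h : m - 1 = (m - 2) + 1 := by omega
      rw [h, Nat.succ_mul]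
    have hk : u - (m - 2) * d < P.length := by omega
    have h1 := (hocc (m - 2) (by omega)).2 (u - (m - 2) * d) hk
    have h2 := (hocc (m - 1) (by omega)).2 (u - (m - 2) * d) hk
    have e1 : a + u = a + (m - 2) * d + (u - (m - 2) * d) := by omega
    have e2 : a + u + d = a + (m - 1) * d + (u - (m - 2) * d) := by omega
    rw [e2, e1, h1, h2]
  · push_neg at hcase
    have hqr : u / d * d + u % d = u := by
      have := Nat.div_add_mod u d
      have hc : d * (u / d) = u / d * d := Nat.mul_comm _ _
      omega
    have hk : u % d < P.length := lt_of_lt_of_le (Nat.mod_lt _ hd) hdP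
    have hs : u / d + 1 < m := by
      have hc : d * (m - 2) = (m - 2) * d := Nat.mul_comm _ _
      have h := Nat.div_lt_of_lt_mul (by omega : u < d * (m - 2))
      omega
    have hsucc : (u / d + 1) * d = u / d * d + d := Nat.succ_mul _ _
    have h1 := (hocc (u / d) (by omega)).2 (u % d) hk
    have h2 := (hocc (u / d + 1) hs).2 (u % d) hk
    have e1 : a + u = a + u / d * d + u % d := by omega
    have e2 : a + u + d = a + (u / d + 1) * d + u % d := by omega
    rw [e2, e1, h1, h2]

lemma iter_per {α : Type*} (P T : List α) (a d m : ℕ)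
    (hd : 0 < d) (hm : 2 ≤ m) (hmd : (m - 1) * d ≤ P.length)
    (hocc : ∀ i < m, Occurs P T (a + i * d)) (r : ℕ) :
    ∀ u, a + u + r * d < a + (m - 1) * d + P.length →
      T[a + u]? = T[a + u + r * d]? := by
  induction r with
  | zero => simp
  | succ n ih =>
    intro u hu
    have hsucc : (n + 1) * d = n * d + d := Nat.succ_mul _ _
    have h1 : a + u + d < a + (m - 1) * d + P.length := by omega
    rw [step_per P T a d m hd hm hmd hocc u h1]
    have h2 := ih (u + d) (by omega)
    have e : a + (u + d) + n * d = a + u + (n + 1) * d := by omega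
    have e' : a + (u + d) = a + u + d := by omega
    rw [e, e'] at h2
    exact h2

/-- If `P` occurs at positions `a + i·d` for all `i < m` with `0 < d` and
`(m − 1)·d ≤ |P|` (so all these occurrences share a common touched position),
then for ending positions `e_i = a + i·d + |P|`, all the length-`ℓ` substrings of `T`
starting at `e_i` (for `i ≤ j < m` with `e_j + ℓ ≤ e_{m−1}`) coincide. -/
theorem stmt_3 {α : Type*} (P T : List α) (a d m : ℕ)
    (hd : 0 < d) (hmd : (m - 1) * d ≤ P.length)
    (hocc : ∀ i < m, Occurs P T (a + i * d))
    (ℓ i j : ℕ) (hij : i ≤ j) (hjm : j < m)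
    (hℓ : (a + j * d + P.length) + ℓ ≤ a + (m - 1) * d + P.length) :
    (T.drop (a + i * d + P.length)).take ℓ =
      (T.drop (a + j * d + P.length)).take ℓ := by
  rcases eq_or_lt_of_le hij with rfl | hij'
  · rfl
  have hm : 2 ≤ m := by omega
  have hTlen : a + (m - 1) * d + P.length ≤ T.length := by
    have := (hocc (m - 1) (by omega)).1
    omega
  have hij_d : i * d ≤ j * d := Nat.mul_le_mul_right d hij
  have hjm_d : j * d ≤ (m - 1) * d := Nat.mul_le_mul_right d (by omega)
  have hsplit : (j - i) * d + i * d = j * d := by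
    rw [← Nat.add_mul]; congr 1; omega
  apply List.ext_getElem?
  intro t
  by_cases ht : t < ℓ
  · rw [List.getElem?_take_of_lt ht, List.getElem?_take_of_lt ht,
      List.getElem?_drop, List.getElem?_drop]
    have key := iter_per P T a d m hd hm hmd hocc (j - i) (i * d + P.length + t)
      (by omega)
    have e1 : a + i * d + P.length + t = a + (i * d + P.length + t) := by omega
    have e2 : a + j * d + P.length + t = a + (i * d + P.length + t) + (j - i) * d := by omega
    rw [e1, e2, key]
  · rw [List.getElem?_eq_none, List.getElem?_eq_none]
    · rw [List.length_take, List.length_drop]; omega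
    · rw [List.length_take, List.length_drop]; omega
end

section
/- Let P and T be strings with |P| ≥ 1, and let α ≤ β ≤ |T| with β − α ≤ 3|P|. Then the set S = { p : P occurs at position p in T, α ≤ p, and p + |P| ≤ β } is the union of two sets S₁ and S₂ such that: each of S₁ and S₂ is a single arithmetic progression, all occurrences in S₁ touch one common position, all occurrences in S₂ touch one common position, and every element of S₂ is greater than every element of S₁. -/
section Aux
variable {α : Type*}


lemma occ_period {P T : List α} {p d : ℕ} (h1 : Occurs P T p) (h2 : Occurs P T (p + d)) :
    ∀ i, i + d < P.length → P[i]? = P[i + d]? := by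
  intro i hi
  have e1 := h1.2 (i + d) hi
  have e2 := h2.2 i (by omega)
  have hpd : p + d + i = p + (i + d) := by omega
  rw [hpd, e1] at e2
  exact e2.symm

lemma triple_gt {P T : List α} {s d e : ℕ} (he : 1 ≤ e)
    (hde : d + e ≤ P.length) (hgt : e < d)
    (h1 : Occurs P T s) (h2 : Occurs P T (s + d)) (h3 : Occurs P T (s + d + e)) :
    Occurs P T (s + (d - e)) := by
  have pere : ∀ i, i + e < P.length → P[i]? = P[i + e]? := occ_period h2 h3
  have perd : ∀ i, i + d < P.length → P[i]? = P[i + d]? := occ_period h1 h2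
  refine ⟨by have := h3.1; omega, ?_⟩
  intro i hi
  by_cases hie : i < e
  · have hA : T[s + (d - e) + i]? = P[(d - e) + i]? := by
      have h := h1.2 ((d - e) + i) (by omega)
      rw [show s + ((d - e) + i) = s + (d - e) + i from by omega] at h
      exact h
    have hB : P[(d - e) + i]? = P[d + i]? := by
      have h := pere ((d - e) + i) (by omega)
      rw [show (d - e) + i + e = d + i from by omega] at h
      exact h
    have hC : P[i]? = P[d + i]? := by
      have h := perd i (by omega)
      rw [show i + d = d + i from by omega] at h
      exact h
    rw [hA, hB, ← hC]
  · have hA : T[s + (d - e) + i]? = P[i - e]? := by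
      have h := h2.2 (i - e) (by omega)
      rw [show s + d + (i - e) = s + (d - e) + i from by omega] at h
      exact h
    have hB : P[i - e]? = P[i]? := by
      have h := pere (i - e) (by omega)
      rw [show i - e + e = i from by omega] at h
      exact h
    rw [hA, hB]

lemma triple_lt {P T : List α} {s d e : ℕ} (hd : 1 ≤ d)
    (hde : d + e ≤ P.length) (hlt : d < e)
    (h1 : Occurs P T s) (h2 : Occurs P T (s + d)) (h3 : Occurs P T (s + d + e)) :
    Occurs P T (s + e) := by
  have pere : ∀ i, i + e < P.length → P[i]? = P[i + e]? := occ_period h2 h3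
  have perd : ∀ i, i + d < P.length → P[i]? = P[i + d]? := occ_period h1 h2
  refine ⟨by have := h3.1; omega, ?_⟩
  intro i hi
  by_cases hid : i < d
  · have hA : T[s + e + i]? = P[e + i]? := by
      have h := h1.2 (e + i) (by omega)
      rw [show s + (e + i) = s + e + i from by omega] at h
      exact h
    have hB : P[i]? = P[e + i]? := by
      have h := pere i (by omega)
      rw [show i + e = e + i from by omega] at h
      exact h
    rw [hA, ← hB]
  · have hA : T[s + e + i]? = P[i - d]? := by
      have h := h3.2 (i - d) (by omega)
      rw [show s + d + e + (i - d) = s + e + i from by omega] at h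
      exact h
    have hB : P[i - d]? = P[i]? := by
      have h := perd (i - d) (by omega)
      rw [show i - d + d = i from by omega] at h
      exact h
    rw [hA, hB]

lemma key (P T : List α) (hP : 1 ≤ P.length) (u w : ℕ) (hw : w ≤ u + 2 * P.length) :
    ∃ a₁ d₁ m₁ : ℕ,
      {p : ℕ | Occurs P T p ∧ u ≤ p ∧ p + P.length ≤ w}
        = {x : ℕ | ∃ i < m₁, x = a₁ + i * d₁} := by
  classical
  set L := P.length with hLdef
  set G : Finset ℕ := (Finset.range (w + 1)).filter
      (fun p => Occurs P T p ∧ u ≤ p ∧ p + L ≤ w) with hGdef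
  have hGmem : ∀ p, p ∈ G ↔ (Occurs P T p ∧ u ≤ p ∧ p + L ≤ w) := by
    intro p
    simp only [hGdef, Finset.mem_filter, Finset.mem_range]
    constructor
    · rintro ⟨-, h⟩; exact h
    · rintro ⟨h1, h2, h3⟩; exact ⟨by omega, h1, h2, h3⟩
  rcases G.eq_empty_or_nonempty with hGe | hne
  · refine ⟨0, 0, 0, ?_⟩
    ext x
    simp only [Set.mem_setOf_eq]
    constructor
    · intro hx
      have : x ∈ G := (hGmem x).mpr hx
      simp [hGe] at this
    · rintro ⟨i, hi, -⟩; omega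
  set p₀ := G.min' hne with hp₀def
  have hp₀G : p₀ ∈ G := G.min'_mem hne
  have hp₀le : ∀ x ∈ G, p₀ ≤ x := fun x hx => G.min'_le x hx
  rcases (G.erase p₀).eq_empty_or_nonempty with hee | hne2
  · -- G = {p₀}
    refine ⟨p₀, 0, 1, ?_⟩
    ext x
    simp only [Set.mem_setOf_eq]
    constructor
    · intro hx
      have hxG : x ∈ G := (hGmem x).mpr hx
      have : x = p₀ := by
        by_contra hxe
        have : x ∈ G.erase p₀ := Finset.mem_erase.mpr ⟨hxe, hxG⟩
        simp [hee] at this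
      exact ⟨0, by omega, by omega⟩
    · rintro ⟨i, hi, hxi⟩
      have : x = p₀ := by omega
      rw [this]
      exact (hGmem p₀).mp hp₀G
  set q₁ := (G.erase p₀).min' hne2 with hq₁def
  have hq₁G : q₁ ∈ G := Finset.mem_of_mem_erase ((G.erase p₀).min'_mem hne2)
  have hq₁ne : q₁ ≠ p₀ := (Finset.mem_erase.mp ((G.erase p₀).min'_mem hne2)).1
  have hq₁min : ∀ x ∈ G, x ≠ p₀ → q₁ ≤ x := fun x hx hxe =>
    (G.erase p₀).min'_le x (Finset.mem_erase.mpr ⟨hxe, hx⟩)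
  have hp₀q₁ : p₀ < q₁ := lt_of_le_of_ne (hp₀le q₁ hq₁G) (Ne.symm hq₁ne)
  set d := q₁ - p₀ with hddef
  have hd1 : 1 ≤ d := by omega
  -- span bound
  have hspan : ∀ x ∈ G, ∀ y ∈ G, y - x ≤ L := by
    intro x hx y hy
    have h1 := (hGmem x).mp hx
    have h2 := (hGmem y).mp hy
    omega
  -- closure under interpolation
  have hclose : ∀ x ∈ G, ∀ z ∈ G, ∀ y, Occurs P T y → x ≤ y → y ≤ z → y ∈ G := by
    intro x hx z hz y hy hxy hyz
    have h1 := (hGmem x).mp hx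
    have h2 := (hGmem z).mp hz
    exact (hGmem y).mpr ⟨hy, by omega, by omega⟩
  -- triple lemmas inside G
  have hoccG : ∀ x ∈ G, Occurs P T x := fun x hx => ((hGmem x).mp hx).1
  have htripgt : ∀ s ∈ G, ∀ t ∈ G, ∀ v ∈ G, s < t → t < v → v - t < t - s →
      s + ((t - s) - (v - t)) ∈ G := by
    intro s hs t ht v hv hst htv hcmp
    have hocc : Occurs P T (s + ((t - s) - (v - t))) := by
      have h2 : Occurs P T (s + (t - s)) := by
        rw [show s + (t - s) = t from by omega]; exact hoccG t ht
      have h3 : Occurs P T (s + (t - s) + (v - t)) := by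
        rw [show s + (t - s) + (v - t) = v from by omega]; exact hoccG v hv
      exact triple_gt (by omega) (by have := hspan s hs v hv; omega) hcmp (hoccG s hs) h2 h3
    exact hclose s hs v hv _ hocc (by omega) (by omega)
  have htriplt : ∀ s ∈ G, ∀ t ∈ G, ∀ v ∈ G, s < t → t < v → t - s < v - t →
      s + (v - t) ∈ G := by
    intro s hs t ht v hv hst htv hcmp
    have hocc : Occurs P T (s + (v - t)) := by
      have h2 : Occurs P T (s + (t - s)) := by
        rw [show s + (t - s) = t from by omega]; exact hoccG t ht
      have h3 : Occurs P T (s + (t - s) + (v - t)) := by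
        rw [show s + (t - s) + (v - t) = v from by omega]; exact hoccG v hv
      exact triple_lt (by omega) (by have := hspan s hs v hv; omega) hcmp (hoccG s hs) h2 h3
    exact hclose s hs v hv _ hocc (by omega) (by omega)
  -- Step 1: all elements are ≡ p₀ mod d
  have hstep1 : ∀ x, x ∈ G → d ∣ (x - p₀) := by
    intro x
    induction x using Nat.strong_induction_on with
    | _ x ih =>
      intro hx
      by_cases hx0 : x = p₀
      · simp [hx0]
      have hxq : q₁ ≤ x := hq₁min x hx hx0
      rcases eq_or_lt_of_le hxq with h | h
      · exact ⟨1, by omega⟩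
      · rcases lt_trichotomy (x - q₁) d with h1 | h1 | h1
        · exfalso
          have hnew := htripgt p₀ hp₀G q₁ hq₁G x hx hp₀q₁ h
            (by omega)
          have := hq₁min _ hnew (by omega)
          omega
        · exact ⟨2, by omega⟩
        · have hnew := htriplt p₀ hp₀G q₁ hq₁G x hx hp₀q₁ h
            (by omega)
          have hlt : p₀ + (x - q₁) < x := by omega
          obtain ⟨k, hk⟩ := ih _ hlt hnew
          refine ⟨k + 1, ?_⟩
          have hexp : d * (k + 1) = d * k + d := by ring
          omega
  -- Step 2: descending by d stays in G
  have hstep2 : ∀ y, y ∈ G → p₀ < y → y - d ∈ G := by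
    intro y
    induction y using Nat.strong_induction_on with
    | _ y ih =>
      intro hy hpy
      have hFne : ((G.filter (· < y)).Nonempty) := ⟨p₀, by
        simp only [Finset.mem_filter]; exact ⟨hp₀G, hpy⟩⟩
      set x := (G.filter (· < y)).max' hFne with hxdef
      have hxmemf := (G.filter (· < y)).max'_mem hFne
      have hxG : x ∈ G := (Finset.mem_filter.mp hxmemf).1
      have hxy : x < y := by
        have h := (Finset.mem_filter.mp hxmemf).2
        exact h
      have hxmax : ∀ z ∈ G, z < y → z ≤ x := by
        intro z hz hzy
        exact (G.filter (· < y)).le_max' z (Finset.mem_filter.mpr ⟨hz, by simpa using hzy⟩)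
      obtain ⟨ky, hky⟩ := hstep1 y hy
      obtain ⟨kx, hkx⟩ := hstep1 x hxG
      have hpx : p₀ ≤ x := hp₀le x hxG
      have hpyle : p₀ ≤ y := le_of_lt hpy
      have hdyx : d ∣ (y - x) := by
        have h := Nat.dvd_sub (hstep1 y hy) (hstep1 x hxG)
        have heq : (y - p₀) - (x - p₀) = y - x := by omega
        rwa [heq] at h
      obtain ⟨kk, hkk⟩ := hdyx
      have hkk1 : 1 ≤ kk := by
        rcases Nat.eq_zero_or_pos kk with h | h
        · exfalso; rw [h] at hkk; omega
        · omega
      rcases eq_or_lt_of_le hkk1 with hk1 | hk2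
      · -- y - x = d
        have : y - d = x := by
          rw [← hk1] at hkk; omega
        rw [this]; exact hxG
      · -- y - x ≥ 2d : derive contradiction
        exfalso
        have hyx2 : 2 * d ≤ y - x := by
          have h5 : d * 2 ≤ d * kk := Nat.mul_le_mul_left d (by omega : 2 ≤ kk)
          omega
        have hpxlt : p₀ < x := by
          rcases eq_or_lt_of_le hpx with h | h
          · exfalso
            have hq₁y : q₁ < y := by omega
            have := hxmax q₁ hq₁G hq₁y
            omega
          · exact h
        have hxd : x - d ∈ G := ih x hxy hxG hpxlt
        have hnew := htriplt (x - d) hxd x hxG y hy (by omega) hxy (by omega)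
        have h1 : x - d + (y - x) ≤ x := hxmax _ hnew (by omega)
        omega
  -- assemble the progression
  set xm := G.max' hne with hxmdef
  have hxmG : xm ∈ G := G.max'_mem hne
  have hxmle : ∀ x ∈ G, x ≤ xm := fun x hx => G.le_max' x hx
  obtain ⟨K, hK⟩ := hstep1 xm hxmG
  have hpxm : p₀ ≤ xm := hp₀le xm hxmG
  have hall : ∀ j, j ≤ K → p₀ + d * (K - j) ∈ G := by
    intro j
    induction j with
    | zero =>
      intro _
      rw [show p₀ + d * (K - 0) = xm from by simp only [Nat.sub_zero]; omega]
      exact hxmG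
    | succ n ihn =>
      intro hn
      have h1 : p₀ + d * (K - n) ∈ G := ihn (by omega)
      have h2 : K - n = (K - (n + 1)) + 1 := by omega
      have h3 : p₀ + d * (K - n) = p₀ + d * (K - (n + 1)) + d := by
        rw [h2, mul_add, mul_one]; ring
      have h4 : p₀ < p₀ + d * (K - n) := by
        have h5 : 1 ≤ K - n := by omega
        have h6 : d * 1 ≤ d * (K - n) := Nat.mul_le_mul_left d h5
        omega
      have := hstep2 _ h1 h4
      rw [h3] at this
      simpa using this
  refine ⟨p₀, d, K + 1, ?_⟩
  ext x
  simp only [Set.mem_setOf_eq]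
  constructor
  · intro hx
    have hxG : x ∈ G := (hGmem x).mpr hx
    obtain ⟨k, hk⟩ := hstep1 x hxG
    have hpxx : p₀ ≤ x := hp₀le x hxG
    have hxle : x ≤ xm := hxmle x hxG
    refine ⟨k, ?_, by rw [mul_comm k d]; omega⟩
    have h7 : d * k ≤ d * K := by omega
    have h8 : k ≤ K := Nat.le_of_mul_le_mul_left h7 (by omega : 0 < d)
    omega
  · rintro ⟨i, hi, rfl⟩
    have hg := hall (K - i) (by omega)
    rw [show K - (K - i) = i from by omega, mul_comm d i] at hg
    exact (hGmem _).mp hg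
end Aux

/-- For an interval `[a, b]` of length at most `3|P|`, the set of occurrences of `P`
in `T` lying inside `[a, b]` is the union of two arithmetic progressions, each with a
common touched position, the second lying entirely to the right of the first. -/
theorem stmt_6 {α : Type*} (P T : List α) (hP : 1 ≤ P.length)
    (a b : ℕ) (hab : a ≤ b) (hb : b ≤ T.length) (h3 : b - a ≤ 3 * P.length) :
    ∃ S₁ S₂ : Set ℕ,
      {p : ℕ | Occurs P T p ∧ a ≤ p ∧ p + P.length ≤ b} = S₁ ∪ S₂ ∧
      (∃ a₁ d₁ m₁ : ℕ, S₁ = {x : ℕ | ∃ i < m₁, x = a₁ + i * d₁}) ∧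
      (∃ a₂ d₂ m₂ : ℕ, S₂ = {x : ℕ | ∃ i < m₂, x = a₂ + i * d₂}) ∧
      (∃ k₁ : ℕ, ∀ p ∈ S₁, p ≤ k₁ ∧ k₁ ≤ p + P.length) ∧
      (∃ k₂ : ℕ, ∀ p ∈ S₂, p ≤ k₂ ∧ k₂ ≤ p + P.length) ∧
      (∀ p ∈ S₁, ∀ q ∈ S₂, p < q) := by
  set L := P.length with hL
  refine ⟨{p : ℕ | Occurs P T p ∧ a ≤ p ∧ p + L ≤ min b (a + 2 * L)},
          {p : ℕ | Occurs P T p ∧ a + L + 1 ≤ p ∧ p + L ≤ b},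
          ?_, ?_, ?_, ?_, ?_, ?_⟩
  · ext p
    simp only [Set.mem_setOf_eq, Set.mem_union]
    constructor
    · rintro ⟨h1, h2, h3'⟩
      by_cases hc : p ≤ a + L
      · exact Or.inl ⟨h1, h2, by omega⟩
      · exact Or.inr ⟨h1, by omega, h3'⟩
    · rintro (⟨h1, h2, h3'⟩ | ⟨h1, h2, h3'⟩)
      · exact ⟨h1, h2, by omega⟩
      · exact ⟨h1, by omega, h3'⟩
  · exact key P T hP a (min b (a + 2 * L)) (by omega)
  · exact key P T hP (a + L + 1) b (by omega)
  · refine ⟨a + L, ?_⟩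
    rintro p ⟨-, h2, h3'⟩
    omega
  · refine ⟨a + 2 * L, ?_⟩
    rintro p ⟨-, h2, h3'⟩
    omega
  · rintro p ⟨-, hp2, hp3⟩ q ⟨-, hq2, hq3⟩
    omega
end

section
/- Let T be a string of length t and let k ≥ 0 be an integer. Then the set of periods p of T satisfying t ≤ 2^{k+1}·(t − p) and 2^k·(t − p) ≤ t (i.e. the periods lying between t − t/2^k and t − t/2^{k+1}) is a single arithmetic progression. -/
/-!
Let `a` and `b` be the least and the greatest period of `T` in the range. The two range
conditions give `2 (b - a) ≤ t - a`, and a number `p ∈ [a, b]` is a period of `T` iff `p - a`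
is a period of the prefix of length `t - a`. Periods of a word that are at most half its
length are, by the weak Fine–Wilf lemma, exactly the multiples of the least positive one.
-/

def IsPeriodOn {β : Type*} (f : ℕ → β) (n p : ℕ) : Prop :=
  ∀ i, i + p < n → f i = f (i + p)

namespace IsPeriodOn

variable {β : Type*} {f : ℕ → β} {n : ℕ}

lemma zero (f : ℕ → β) (n : ℕ) : IsPeriodOn f n 0 := fun _ _ => rfl

lemma add {r s : ℕ} (hr : IsPeriodOn f n r) (hs : IsPeriodOn f n s) :
    IsPeriodOn f n (r + s) := fun i hi => by
  rw [hr i (by omega), hs (i + r) (by omega), Nat.add_assoc]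

lemma mul {d : ℕ} (hd : IsPeriodOn f n d) (j : ℕ) : IsPeriodOn f n (j * d) := by
  induction j with
  | zero => simpa using zero f n
  | succ j ih => simpa [Nat.succ_mul] using ih.add hd

lemma sub {r s : ℕ} (hr : IsPeriodOn f n r) (hs : IsPeriodOn f n s) (hrs : r ≤ s)
    (hn : r + s ≤ n) : IsPeriodOn f n (s - r) := by
  intro i hi
  by_cases h : i + s < n
  · have h' := hr (i + (s - r)) (by omega)
    rw [show i + (s - r) + r = i + s by omega] at h'
    rw [hs i h, h']
  · have h₁ := hr (i - r) (by omega)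
    have h₂ := hs (i - r) (by omega)
    rw [show i - r + r = i by omega] at h₁
    rw [show i - r + s = i + (s - r) by omega] at h₂
    rw [← h₁, h₂]

/-- The weak periodicity lemma of Fine and Wilf. -/
lemma gcd {r s : ℕ} (hr : IsPeriodOn f n r) (hs : IsPeriodOn f n s) (hn : r + s ≤ n) :
    IsPeriodOn f n (r.gcd s) := by
  induction h : r + s using Nat.strong_induction_on generalizing r s with
  | _ N ih =>
  wlog hrs : r ≤ s generalizing r s
  · rw [Nat.gcd_comm]
    exact this hs hr (by omega) (by omega) (by omega)
  rcases Nat.eq_zero_or_pos r with rfl | hr0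
  · simpa using hs
  rw [← Nat.gcd_sub_self_right hrs]
  exact ih _ (by omega) hr (hr.sub hs hrs hn) (by omega) rfl

lemma add_iff {a r : ℕ} (ha : IsPeriodOn f n a) :
    IsPeriodOn f n (a + r) ↔ IsPeriodOn f (n - a) r := by
  constructor <;> intro h i hi <;> rw [h i (by omega), ha (i + r) (by omega)] <;> ring_nf

lemma dvd_of_forall_lt {d r : ℕ} (hd : IsPeriodOn f n d) (hd0 : 0 < d)
    (hmin : ∀ e, 0 < e → e < d → ¬ IsPeriodOn f n e) (hr : IsPeriodOn f n r)
    (hn : d + r ≤ n) : d ∣ r := by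
  have hg : IsPeriodOn f n (d.gcd r) := hd.gcd hr hn
  have hgd : d.gcd r ≤ d := Nat.gcd_le_left r hd0
  have hg0 : 0 < d.gcd r := Nat.gcd_pos_of_pos_left r hd0
  have : d.gcd r = d := by
    by_contra hne
    exact hmin _ hg0 (lt_of_le_of_ne hgd hne) hg
  exact this ▸ Nat.gcd_dvd_right d r

end IsPeriodOn

section Progression

open IsPeriodOn

variable {β : Type*} {f : ℕ → β}

lemma setOf_isPeriodOn_le_eq_progression {n c : ℕ} (hc : 2 * c ≤ n) :
    ∃ d m : ℕ, {r | IsPeriodOn f n r ∧ r ≤ c} = {x | ∃ i < m, x = i * d} := by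
  classical
  by_cases h : ∃ d, 0 < d ∧ IsPeriodOn f n d ∧ d ≤ c
  · obtain ⟨hd0, hd, hdc⟩ := Nat.find_spec h
    set d := Nat.find h
    have hmin : ∀ e, 0 < e → e < d → ¬ IsPeriodOn f n e := fun e he0 hed he =>
      Nat.find_min h hed ⟨he0, he, by omega⟩
    refine ⟨d, c / d + 1, Set.ext fun r => ⟨?_, ?_⟩⟩
    · rintro ⟨hr, hrc⟩
      obtain ⟨i, rfl⟩ := hd.dvd_of_forall_lt hd0 hmin hr (by omega)
      exact ⟨i, Nat.lt_succ_of_le ((Nat.le_div_iff_mul_le hd0).2 (by linarith)), by ring⟩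
    · rintro ⟨i, hi, rfl⟩
      exact ⟨hd.mul i, (Nat.le_div_iff_mul_le hd0).1 (Nat.le_of_lt_succ hi)⟩
  · push Not at h
    refine ⟨0, 1, Set.ext fun r => ⟨?_, ?_⟩⟩
    · rintro ⟨hr, hrc⟩
      obtain rfl : r = 0 := by
        by_contra hr0
        exact (h r (Nat.pos_of_ne_zero hr0) hr).not_ge hrc
      exact ⟨0, Nat.one_pos, rfl⟩
    · rintro ⟨i, hi, rfl⟩
      simpa using zero f n

lemma setOf_isPeriodOn_Icc_eq_progression {n a b : ℕ} (ha : IsPeriodOn f n a) (hab : a ≤ b)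
    (hn : 2 * (b - a) ≤ n - a) :
    ∃ d m : ℕ, {p | IsPeriodOn f n p ∧ a ≤ p ∧ p ≤ b} = {x | ∃ i < m, x = a + i * d} := by
  obtain ⟨d, m, h⟩ := setOf_isPeriodOn_le_eq_progression (f := f) hn
  refine ⟨d, m, Set.ext fun p => ⟨?_, ?_⟩⟩
  · rintro ⟨hp, hap, hpb⟩
    have hmem : p - a ∈ {r | IsPeriodOn f (n - a) r ∧ r ≤ b - a} :=
      ⟨(ha.add_iff).1 (by rwa [Nat.add_sub_cancel' hap]), by omega⟩
    obtain ⟨i, hi, hpi⟩ := h ▸ hmem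
    exact ⟨i, hi, by omega⟩
  · rintro ⟨i, hi, rfl⟩
    obtain ⟨hp, hpc⟩ : i * d ∈ {r | IsPeriodOn f (n - a) r ∧ r ≤ b - a} := h ▸ ⟨i, hi, rfl⟩
    exact ⟨(ha.add_iff).2 hp, by omega, by omega⟩

end Progression

/-- The set of periods `p` of `T` lying between `t − t/2^k` and `t − t/2^{k+1}`
forms a single arithmetic progression. -/
theorem stmt_9 {α : Type*} (T : List α) (k : ℕ) :
    ∃ a d m : ℕ,
      {p : ℕ | p ≤ T.length ∧
          (∀ i, i + p < T.length → T[i]? = T[i + p]?) ∧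
          T.length ≤ 2 ^ (k + 1) * (T.length - p) ∧
          2 ^ k * (T.length - p) ≤ T.length} =
        {x : ℕ | ∃ i < m, x = a + i * d} := by
  set t := T.length
  set S := {p : ℕ | p ≤ t ∧ IsPeriodOn (fun i => T[i]?) t p ∧
    t ≤ 2 ^ (k + 1) * (t - p) ∧ 2 ^ k * (t - p) ≤ t}
  change ∃ a d m : ℕ, S = _
  rcases S.eq_empty_or_nonempty with hS | hS
  · exact ⟨0, 0, 0, by rw [hS]; simp⟩
  have hbdd : BddAbove S := ⟨t, fun p hp => hp.1⟩
  obtain ⟨-, ha, -, ha₂⟩ := Nat.sInf_mem hS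
  obtain ⟨hbt, -, hb₁, -⟩ := Nat.sSup_mem hS hbdd
  have hab : sInf S ≤ sSup S := csInf_le_csSup hS (OrderBot.bddBelow S) hbdd
  have hwindow : t - sInf S ≤ 2 * (t - sSup S) := by
    refine Nat.le_of_mul_le_mul_left ?_ (Nat.two_pow_pos k)
    calc 2 ^ k * (t - sInf S) ≤ 2 ^ (k + 1) * (t - sSup S) := ha₂.trans hb₁
      _ = 2 ^ k * (2 * (t - sSup S)) := by ring
  obtain ⟨d, m, h⟩ := setOf_isPeriodOn_Icc_eq_progression ha hab (by omega)
  refine ⟨sInf S, d, m, h ▸ Set.ext fun p => ⟨?_, ?_⟩⟩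
  · intro hp
    exact ⟨hp.2.1, Nat.sInf_le hp, le_csSup hbdd hp⟩
  · rintro ⟨hp, hap, hpb⟩
    refine ⟨hpb.trans hbt, hp, hb₁.trans ?_, le_trans ?_ ha₂⟩ <;> gcongr
end

section
/- Let T be a string of length t, let q ≥ 1, and let u satisfy q ≤ u ≤ 2q and u ≤ t. Then T has a border of length u if and only if the length-q prefix of T occurs at position t − u in T and the length-q suffix of T occurs at position u − q in T. -/
/-- For `1 ≤ q ≤ u ≤ 2q` and `u ≤ t`, the string `T` has a border of length `u`
iff its length-`q` prefix occurs at position `t − u` and its length-`q` suffix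
occurs at position `u − q`. -/
theorem stmt_11 {α : Type*} (T : List α) (q u : ℕ)
    (hq : 1 ≤ q) (hqu : q ≤ u) (hu2 : u ≤ 2 * q) (hut : u ≤ T.length) :
    T.take u = T.drop (T.length - u) ↔
      Occurs (T.take q) T (T.length - u) ∧
        Occurs (T.drop (T.length - q)) T (u - q) := by
  have hqt : q ≤ T.length := le_trans hqu hut
  have border_iff : T.take u = T.drop (T.length - u) ↔
      ∀ i < u, T[i]? = T[T.length - u + i]? := by
    constructor
    · intro h i hi
      have := congrArg (·[i]?) h
      simpa [List.getElem?_take, hi, List.getElem?_drop] using this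
    · intro h
      apply List.ext_getElem?
      intro i
      by_cases hi : i < u
      · simp [List.getElem?_take, hi, List.getElem?_drop, h i hi]
      · rw [List.getElem?_eq_none, List.getElem?_eq_none]
        · simp; omega
        · simp; omega
  rw [border_iff]
  have ltake : (T.take q).length = q := by simp [hqt]
  have ldrop : (T.drop (T.length - q)).length = q := by simp; omega
  constructor
  · intro h
    refine ⟨⟨by rw [ltake]; omega, ?_⟩, ⟨by rw [ldrop]; omega, ?_⟩⟩
    · intro i hi
      rw [ltake] at hi
      rw [List.getElem?_take, if_pos hi]
      exact (h i (lt_of_lt_of_le hi hqu)).symm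
    · intro i hi
      rw [ldrop] at hi
      rw [List.getElem?_drop]
      have h2 := h (u - q + i) (by omega)
      have e1 : T.length - u + (u - q + i) = T.length - q + i := by omega
      rw [e1] at h2
      exact h2
  · rintro ⟨⟨_, hpre⟩, ⟨_, hsuf⟩⟩
    rw [ltake] at hpre
    rw [ldrop] at hsuf
    intro i hi
    by_cases hiq : i < q
    · have := hpre i hiq
      rw [List.getElem?_take, if_pos hiq] at this
      exact this.symm
    · have hj : i - (u - q) < q := by omega
      have := hsuf (i - (u - q)) hj
      rw [List.getElem?_drop] at this
      have e1 : u - q + (i - (u - q)) = i := by omega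
      have e2 : T.length - q + (i - (u - q)) = T.length - u + i := by omega
      rw [e1, e2] at this
      exact this
end

section
/- Let n ∈ ℕ, w : Fin n → ℕ, s = Σ_{i<n} w(i), and t ≤ s. Over the alphabet {0,1}, let block(v) = 0^v 1 0^{s−v} (a string of length s + 1, for v ≤ s), let P be the concatenation of 2^n copies of block(t), and let T be the concatenation, over x = 0, 1, …, 2^n − 1 in order, of block(x̄·w̄), where x̄·w̄ = Σ_{i<n} (i-th binary digit of x)·w(i). Then the Hamming distance between P and T equals 2 times the number of x with 0 ≤ x < 2^n and x̄·w̄ ≠ t. -/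
/-- `block s v = 0^v 1 0^(s−v)`, a string of length `s + 1` over `{0,1}` (as `Bool`). -/
def block (s v : ℕ) : List Bool :=
  List.replicate v false ++ [true] ++ List.replicate (s - v) false

/-- `x̄·w̄ = Σ_{i<n} (i-th binary digit of x)·w(i)`. -/
def dotw (n : ℕ) (w : Fin n → ℕ) (x : ℕ) : ℕ :=
  ∑ i : Fin n, if Nat.testBit x i.val then w i else 0

/-- Hamming distance between two strings (of equal length): the number of
indices at which they differ. -/
def HD (A B : List Bool) : ℕ :=
  ((Finset.range A.length).filter (fun i => A[i]? ≠ B[i]?)).card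

lemma block_length (s v : ℕ) (hv : v ≤ s) : (block s v).length = s + 1 := by
  simp [block]; omega

lemma block_getElem? (s v : ℕ) (hv : v ≤ s) (i : ℕ) :
    (block s v)[i]? = if i ≤ s then some (decide (i = v)) else none := by
  unfold block
  rcases lt_trichotomy i v with h | h | h
  · rw [List.getElem?_append_left, List.getElem?_append_left]
    · simp [List.getElem?_replicate, h]; omega
    · simpa using h
    · simp; omega
  · subst h
    rw [List.getElem?_append_left, List.getElem?_append_right] <;> simp [hv]
  · rw [List.getElem?_append_right (by simp; omega)]
    simp only [List.length_append, List.length_replicate, List.length_cons,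
      List.length_nil, List.getElem?_replicate]
    have hne : decide (i = v) = false := by simp; omega
    rw [hne]
    split <;> split <;> first | rfl | omega

lemma hd_block (s a b : ℕ) (ha : a ≤ s) (hb : b ≤ s) :
    HD (block s a) (block s b) = if a = b then 0 else 2 := by
  unfold HD
  rw [block_length s a ha]
  split
  · subst ‹a = b›; simp
  · rename_i hab
    have : (Finset.range (s+1)).filter (fun i => (block s a)[i]? ≠ (block s b)[i]?)
        = {a, b} := by
      ext i
      simp only [Finset.mem_filter, Finset.mem_range, block_getElem? s a ha,
        block_getElem? s b hb, Finset.mem_insert, Finset.mem_singleton]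
      constructor
      · rintro ⟨hi, hne⟩
        by_contra hcon
        push_neg at hcon
        rw [if_pos (by omega), if_pos (by omega)] at hne
        simp [hcon.1, hcon.2] at hne
      · rintro (rfl | rfl)
        · refine ⟨by omega, ?_⟩
          rw [if_pos (by omega), if_pos (by omega)]
          simp [hab]
        · refine ⟨by omega, ?_⟩
          rw [if_pos (by omega), if_pos (by omega)]
          simp [Ne.symm hab]
    rw [this, Finset.card_pair hab]

lemma hd_append (A B C D : List Bool) (h : A.length = B.length) :
    HD (A ++ C) (B ++ D) = HD A B + HD C D := by
  unfold HD
  rw [List.length_append, Finset.range_add, Finset.filter_union,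
    Finset.card_union_of_disjoint, Finset.filter_map, Finset.card_map]
  · congr 1
    · apply congrArg
      apply Finset.filter_congr
      intro i hi
      simp only [Finset.mem_range] at hi
      rw [List.getElem?_append_left hi, List.getElem?_append_left (h ▸ hi)]
    · apply congrArg
      apply Finset.filter_congr
      intro i hi
      simp only [Finset.mem_range] at hi
      simp only [Function.comp, addLeftEmbedding_apply]
      rw [List.getElem?_append_right (by omega), List.getElem?_append_right (by omega),
        show A.length + i - A.length = i by omega, show A.length + i - B.length = i by omega]
  · rw [Finset.disjoint_left]
    intro i hi1 hi2
    simp only [Finset.mem_filter, Finset.mem_range] at hi1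
    simp only [Finset.mem_filter, Finset.mem_map, addLeftEmbedding_apply] at hi2
    obtain ⟨⟨j, _, rfl⟩, _⟩ := hi2
    omega

lemma hd_flatten (l : List ℕ) (f g : ℕ → List Bool) (h : ∀ x, (f x).length = (g x).length) :
    HD ((l.map f).flatten) ((l.map g).flatten) = (l.map (fun x => HD (f x) (g x))).sum := by
  induction l with
  | nil => simp [HD]
  | cons a l ih =>
    simp only [List.map_cons, List.flatten_cons, List.sum_cons]
    rw [hd_append _ _ _ _ (h a), ih]

/-- The Hamming distance between the Lohrey strings `P = (block t)^{2^n}` and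
`T = Π_{x<2^n} block(x̄·w̄)` equals twice the number of `x < 2^n` with `x̄·w̄ ≠ t`. -/
theorem stmt_13 (n : ℕ) (w : Fin n → ℕ) (t : ℕ) (ht : t ≤ ∑ i, w i) :
    HD ((List.replicate (2 ^ n) (block (∑ i, w i) t)).flatten)
        (((List.range (2 ^ n)).map fun x => block (∑ i, w i) (dotw n w x)).flatten) =
      2 * ((Finset.range (2 ^ n)).filter fun x => dotw n w x ≠ t).card := by
  set s := ∑ i, w i with hs
  have hdot : ∀ x, dotw n w x ≤ s := by
    intro x
    apply Finset.sum_le_sum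
    intro i _
    split <;> simp
  have hrep : List.replicate (2 ^ n) (block s t)
      = (List.range (2 ^ n)).map (fun _ => block s t) := by
    rw [List.map_const']; simp
  rw [hrep, hd_flatten _ _ _ (fun x => by
    rw [block_length s t ht, block_length s (dotw n w x) (hdot x)])]
  have : ((List.range (2 ^ n)).map fun x => HD (block s t) (block s (dotw n w x))).sum
      = ∑ x ∈ Finset.range (2 ^ n), HD (block s t) (block s (dotw n w x)) := rfl
  rw [this]
  have : ∀ x ∈ Finset.range (2 ^ n), HD (block s t) (block s (dotw n w x))
      = if dotw n w x ≠ t then 2 else 0 := by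
    intro x _
    rw [hd_block s t (dotw n w x) ht (hdot x)]
    rcases eq_or_ne (dotw n w x) t with h | h
    · simp [h]
    · simp [h, Ne.symm h]
  rw [Finset.sum_congr rfl this, Finset.sum_ite, Finset.sum_const, Finset.sum_const]
  simp [mul_comm]
end
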